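/- arXiv:1912.01419 — 2 statements merged into one kernel-verified Lean document; each statement's English description precedes it below -/
import Mathlib

section
/- Let n ≥ 1, let A ∈ ℝ^{n×n} be symmetric, let D ∈ ℝ^{n×n} be diagonal, and let r > 0 be such that D + (r²−1)I is positive definite. For 1 ≤ p ≤ n, the p-th smallest eigenvalue of the Bethe-Hessian H_r = (r²−1)I + D − rA satisfies s_p^↑(H_r) ≤ 0 if and only if the p-th largest eigenvalue of the symmetric regularized Laplacian L^{sym}_{r²−1} = (D+(r²−1)I)^{-1/2} A (D+(r²−1)I)^{-1/2} satisfies s_p^↓(L^{sym}_{r²−1}) ≥ 1/r. -/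
open Matrix

/-- The eigenvalues of a real matrix `B` arranged in nondecreasing order (counted with
multiplicity), so `eigAsc B p` is the `(p+1)`-th smallest eigenvalue `s_{p+1}^↑(B)`
(indices `p : Fin n` are 0-based). Junk value `0` if `B` is not symmetric. -/
noncomputable def eigAsc {n : ℕ} (B : Matrix (Fin n) (Fin n) ℝ) : Fin n → ℝ :=
  if hB : B.IsHermitian then hB.eigenvalues ∘ Tuple.sort hB.eigenvalues else 0

/-- `eigDesc B p` is the `(p+1)`-th largest eigenvalue `s_{p+1}^↓(B)` (0-based `p`). -/
noncomputable def eigDesc {n : ℕ} (B : Matrix (Fin n) (Fin n) ℝ) (p : Fin n) : ℝ :=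
  eigAsc B p.rev

open Finset Module

variable {n : ℕ}

noncomputable def sortedOB {B : Matrix (Fin n) (Fin n) ℝ} (hB : B.IsHermitian) :
    OrthonormalBasis (Fin n) ℝ (EuclideanSpace ℝ (Fin n)) :=
  hB.eigenvectorBasis.reindex (Tuple.sort hB.eigenvalues).symm

lemma eigAsc_eq {B : Matrix (Fin n) (Fin n) ℝ} (hB : B.IsHermitian) :
    eigAsc B = hB.eigenvalues ∘ Tuple.sort hB.eigenvalues := dif_pos hB

lemma eigAsc_mono {B : Matrix (Fin n) (Fin n) ℝ} (hB : B.IsHermitian) :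
    Monotone (eigAsc B) := by
  rw [eigAsc_eq hB]; exact Tuple.monotone_sort _

lemma apply_sortedOB {B : Matrix (Fin n) (Fin n) ℝ} (hB : B.IsHermitian) (i : Fin n) :
    Matrix.toEuclideanLin B (sortedOB hB i) = eigAsc B i • sortedOB hB i := by
  have h1 : sortedOB hB i = hB.eigenvectorBasis (Tuple.sort hB.eigenvalues i) := by
    simp [sortedOB]
  have h2 := hB.mulVec_eigenvectorBasis (Tuple.sort hB.eigenvalues i)
  rw [eigAsc_eq hB, h1]
  apply (WithLp.equiv 2 (Fin n → ℝ)).injective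
  simpa [Matrix.toEuclideanLin_apply] using h2

local notation "⟪" x ", " y "⟫" => inner (𝕜 := ℝ) x y

lemma norm_sq_eq_sum {B : Matrix (Fin n) (Fin n) ℝ} (hB : B.IsHermitian)
    (x : EuclideanSpace ℝ (Fin n)) :
    ‖x‖ ^ 2 = ∑ i, ⟪sortedOB hB i, x⟫ ^ 2 := by
  rw [← real_inner_self_eq_norm_sq, ← OrthonormalBasis.sum_inner_mul_inner (sortedOB hB) x x]
  refine Finset.sum_congr rfl fun i _ => ?_
  rw [real_inner_comm x (sortedOB hB i), sq]

lemma quad_eq_sum {B : Matrix (Fin n) (Fin n) ℝ} (hB : B.IsHermitian)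
    (x : EuclideanSpace ℝ (Fin n)) :
    ⟪x, Matrix.toEuclideanLin B x⟫ = ∑ i, eigAsc B i * ⟪sortedOB hB i, x⟫ ^ 2 := by
  have hsymm := (Matrix.isHermitian_iff_isSymmetric.mp hB)
  rw [← OrthonormalBasis.sum_inner_mul_inner (sortedOB hB) x (Matrix.toEuclideanLin B x)]
  refine Finset.sum_congr rfl fun i _ => ?_
  rw [← hsymm (sortedOB hB i) x, apply_sortedOB hB i, inner_smul_left,
    real_inner_comm x (sortedOB hB i)]
  simp only [starRingEnd_apply, star_trivial]
  ring

noncomputable def Wspan {B : Matrix (Fin n) (Fin n) ℝ} (hB : B.IsHermitian)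
    (s : Finset (Fin n)) : Submodule ℝ (EuclideanSpace ℝ (Fin n)) :=
  Submodule.span ℝ (sortedOB hB '' ↑s)

lemma finrank_Wspan {B : Matrix (Fin n) (Fin n) ℝ} (hB : B.IsHermitian)
    (s : Finset (Fin n)) : Module.finrank ℝ (Wspan hB s) = s.card := by
  have hon : Orthonormal ℝ (fun i : s => sortedOB hB i) :=
    (sortedOB hB).orthonormal.comp _ Subtype.val_injective
  have hli := hon.linearIndependent
  have : Wspan hB s = Submodule.span ℝ (Set.range fun i : s => sortedOB hB i) := by
    rw [Wspan]; congr 1; ext y; simp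
  rw [this, finrank_span_eq_card hli, Fintype.card_coe]

lemma inner_eq_zero_of_mem_Wspan {B : Matrix (Fin n) (Fin n) ℝ} (hB : B.IsHermitian)
    {s : Finset (Fin n)} {x : EuclideanSpace ℝ (Fin n)} (hx : x ∈ Wspan hB s)
    {i : Fin n} (hi : i ∉ s) : ⟪sortedOB hB i, x⟫ = 0 := by
  induction hx using Submodule.span_induction with
  | mem y hy =>
    obtain ⟨j, hj, rfl⟩ := hy
    have hij : i ≠ j := fun h => hi (h ▸ hj)
    exact (sortedOB hB).orthonormal.2 hij
  | zero => simp
  | add y z _ _ hy hz => rw [inner_add_right, hy, hz, add_zero]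
  | smul a y _ hy => rw [inner_smul_right, hy, mul_zero]

lemma mem_Wspan {B : Matrix (Fin n) (Fin n) ℝ} (hB : B.IsHermitian)
    {s : Finset (Fin n)} {x : EuclideanSpace ℝ (Fin n)}
    (h : ∀ i ∉ s, ⟪sortedOB hB i, x⟫ = 0) : x ∈ Wspan hB s := by
  rw [← (sortedOB hB).sum_repr' x]
  refine Submodule.sum_mem _ fun i _ => ?_
  by_cases his : i ∈ s
  · exact Submodule.smul_mem _ _ (Submodule.subset_span ⟨i, his, rfl⟩)
  · rw [h i his, zero_smul]; exact Submodule.zero_mem _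

lemma exists_ne_zero_mem_inf {W U : Submodule ℝ (EuclideanSpace ℝ (Fin n))}
    (h : n < Module.finrank ℝ W + Module.finrank ℝ U) :
    ∃ x : EuclideanSpace ℝ (Fin n), x ≠ 0 ∧ x ∈ W ∧ x ∈ U := by
  have hsup : Module.finrank ℝ ↥(W ⊔ U) ≤ n := by
    have := Submodule.finrank_le (W ⊔ U)
    simpa [finrank_euclideanSpace_fin] using this
  have hinf : 0 < Module.finrank ℝ ↥(W ⊓ U) := by
    have := Submodule.finrank_sup_add_finrank_inf_eq W U
    omega
  haveI : Nontrivial ↥(W ⊓ U) := Module.nontrivial_of_finrank_pos hinf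
  obtain ⟨⟨x, hx⟩, hxne⟩ := exists_ne (0 : ↥(W ⊓ U))
  exact ⟨x, by simpa [Submodule.mk_eq_zero] using hxne, hx.1, hx.2⟩

lemma eigAsc_le_iff {B : Matrix (Fin n) (Fin n) ℝ} (hB : B.IsHermitian) (p : Fin n) (c : ℝ) :
    eigAsc B p ≤ c ↔ ∃ W : Submodule ℝ (EuclideanSpace ℝ (Fin n)),
      Module.finrank ℝ W = (p : ℕ) + 1 ∧
      ∀ x ∈ W, ⟪x, Matrix.toEuclideanLin B x⟫ ≤ c * ‖x‖ ^ 2 := by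
  constructor
  · intro hc
    refine ⟨Wspan hB (Finset.Iic p), by rw [finrank_Wspan, Fin.card_Iic], fun x hx => ?_⟩
    rw [quad_eq_sum hB, norm_sq_eq_sum hB, Finset.mul_sum]
    refine Finset.sum_le_sum fun i _ => ?_
    by_cases his : i ∈ Finset.Iic p
    · have h1 : eigAsc B i ≤ c :=
        le_trans (eigAsc_mono hB (Finset.mem_Iic.mp his)) hc
      exact mul_le_mul_of_nonneg_right h1 (sq_nonneg _)
    · rw [inner_eq_zero_of_mem_Wspan hB hx his]; simp
  · rintro ⟨W, hdim, hW⟩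
    by_contra hcon
    push_neg at hcon
    obtain ⟨x, hxne, hxW, hxU⟩ :=
      exists_ne_zero_mem_inf (W := W) (U := Wspan hB (Finset.Ici p))
        (by rw [hdim, finrank_Wspan, Fin.card_Ici]; omega)
    have hxnorm : 0 < ‖x‖ ^ 2 := by
      have := norm_pos_iff.mpr hxne
      positivity
    have hlow : eigAsc B p * ‖x‖ ^ 2 ≤ ⟪x, Matrix.toEuclideanLin B x⟫ := by
      rw [quad_eq_sum hB, norm_sq_eq_sum hB, Finset.mul_sum]
      refine Finset.sum_le_sum fun i _ => ?_
      by_cases his : i ∈ Finset.Ici p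
      · exact mul_le_mul_of_nonneg_right (eigAsc_mono hB (Finset.mem_Ici.mp his)) (sq_nonneg _)
      · rw [inner_eq_zero_of_mem_Wspan hB hxU his]; simp
    have := hW x hxW
    nlinarith
lemma le_eigDesc_iff {B : Matrix (Fin n) (Fin n) ℝ} (hB : B.IsHermitian) (p : Fin n) (c : ℝ) :
    c ≤ eigDesc B p ↔ ∃ W : Submodule ℝ (EuclideanSpace ℝ (Fin n)),
      Module.finrank ℝ W = (p : ℕ) + 1 ∧
      ∀ x ∈ W, c * ‖x‖ ^ 2 ≤ ⟪x, Matrix.toEuclideanLin B x⟫ := by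
  have hrev : (p.rev : ℕ) = n - ((p : ℕ) + 1) := Fin.val_rev p
  have hp : (p : ℕ) < n := p.isLt
  constructor
  · intro hc
    refine ⟨Wspan hB (Finset.Ici p.rev), by rw [finrank_Wspan, Fin.card_Ici]; omega,
      fun x hx => ?_⟩
    rw [quad_eq_sum hB, norm_sq_eq_sum hB, Finset.mul_sum]
    refine Finset.sum_le_sum fun i _ => ?_
    by_cases his : i ∈ Finset.Ici p.rev
    · have h1 : c ≤ eigAsc B i :=
        le_trans hc (eigAsc_mono hB (Finset.mem_Ici.mp his))
      exact mul_le_mul_of_nonneg_right h1 (sq_nonneg _)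
    · rw [inner_eq_zero_of_mem_Wspan hB hx his]; simp
  · rintro ⟨W, hdim, hW⟩
    by_contra hcon
    push_neg at hcon
    obtain ⟨x, hxne, hxW, hxU⟩ :=
      exists_ne_zero_mem_inf (W := W) (U := Wspan hB (Finset.Iic p.rev))
        (by rw [hdim, finrank_Wspan, Fin.card_Iic]; omega)
    have hxnorm : 0 < ‖x‖ ^ 2 := by
      have := norm_pos_iff.mpr hxne
      positivity
    have hup : ⟪x, Matrix.toEuclideanLin B x⟫ ≤ eigDesc B p * ‖x‖ ^ 2 := by
      rw [quad_eq_sum hB, norm_sq_eq_sum hB, Finset.mul_sum]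
      refine Finset.sum_le_sum fun i _ => ?_
      by_cases his : i ∈ Finset.Iic p.rev
      · exact mul_le_mul_of_nonneg_right (eigAsc_mono hB (Finset.mem_Iic.mp his)) (sq_nonneg _)
      · rw [inner_eq_zero_of_mem_Wspan hB hxU his]; simp
    have := hW x hxW
    nlinarith

lemma toEL_mul (P Q : Matrix (Fin n) (Fin n) ℝ) (x : EuclideanSpace ℝ (Fin n)) :
    Matrix.toEuclideanLin (P * Q) x = Matrix.toEuclideanLin P (Matrix.toEuclideanLin Q x) := by
  apply (WithLp.equiv 2 (Fin n → ℝ)).injective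
  simp [Matrix.toEuclideanLin_apply, Matrix.mulVec_mulVec]

lemma toEL_one (x : EuclideanSpace ℝ (Fin n)) :
    Matrix.toEuclideanLin (1 : Matrix (Fin n) (Fin n) ℝ) x = x := by
  apply (WithLp.equiv 2 (Fin n → ℝ)).injective
  simp [Matrix.toEuclideanLin_apply]


set_option maxHeartbeats 2000000 in
/-- For symmetric `A`, diagonal `D`, `r > 0` with `D + (r²−1)I` positive
definite, the `p`-th smallest eigenvalue of the Bethe-Hessian `H_r = (r²−1)I + D − rA`
satisfies `s_p^↑(H_r) ≤ 0` iff the `p`-th largest eigenvalue of the symmetric regularized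
Laplacian `L^{sym}_{r²−1} = (D+(r²−1)I)^{-1/2} A (D+(r²−1)I)^{-1/2}` satisfies
`s_p^↓(L^{sym}_{r²−1}) ≥ 1/r`. -/
theorem betheHessian_nonpos_iff_regSymLaplacian_ge
    (n : ℕ) (hn : 1 ≤ n)
    (A D : Matrix (Fin n) (Fin n) ℝ)
    (hA : Aᵀ = A) (hD : D.IsDiag)
    (r : ℝ) (hr : 0 < r)
    (hM : (D + (r ^ 2 - 1) • (1 : Matrix (Fin n) (Fin n) ℝ)).PosDef)
    (p : Fin n) :
    eigAsc ((r ^ 2 - 1) • (1 : Matrix (Fin n) (Fin n) ℝ) + D - r • A) p ≤ 0 ↔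
      1 / r ≤ eigDesc ((hM.posSemidef.isHermitian.cfc Real.sqrt)⁻¹ * A * (hM.posSemidef.isHermitian.cfc Real.sqrt)⁻¹) p := by
  set M : Matrix (Fin n) (Fin n) ℝ := D + (r ^ 2 - 1) • (1 : Matrix (Fin n) (Fin n) ℝ)
    with hMdef
  set S : Matrix (Fin n) (Fin n) ℝ := hM.posSemidef.isHermitian.cfc Real.sqrt with hSdef
  have hSps : S.IsHermitian := by
    rw [hSdef, ← Matrix.IsHermitian.cfc_eq]; exact cfc_predicate _ _
  have hSherm : S.IsHermitian := hSps
  have hSS : S * S = M := by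
    rw [hSdef, ← Matrix.IsHermitian.cfc_eq, ← cfc_mul (fun x => Real.sqrt x) (fun x => Real.sqrt x) M]
    conv_rhs => rw [← cfc_id' ℝ M (ha := hM.posSemidef.isHermitian)]
    refine cfc_congr fun x hx => ?_
    rw [hM.posSemidef.isHermitian.spectrum_real_eq_range_eigenvalues] at hx
    obtain ⟨i, rfl⟩ := hx
    exact Real.mul_self_sqrt (hM.eigenvalues_pos i).le
  have hdet : IsUnit S.det := by
    have h1 : S.det * S.det = M.det := by rw [← Matrix.det_mul, hSS]
    have h2 := hM.det_pos
    exact isUnit_iff_ne_zero.mpr (by nlinarith)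
  have hinvmul : S⁻¹ * S = 1 := Matrix.nonsing_inv_mul S hdet
  have hmulinv : S * S⁻¹ = 1 := Matrix.mul_nonsing_inv S hdet
  have hSinvherm : (S⁻¹).IsHermitian := by
    rw [Matrix.IsHermitian, Matrix.conjTranspose_nonsing_inv, hSherm.eq]
  have hAh : A.IsHermitian := by
    rw [Matrix.IsHermitian, Matrix.conjTranspose_eq_transpose_of_trivial, hA]
  have hDh : D.IsHermitian := by
    rw [Matrix.IsHermitian, Matrix.conjTranspose_eq_transpose_of_trivial, hD.isSymm.eq]
  have hH : ((r ^ 2 - 1) • (1 : Matrix (Fin n) (Fin n) ℝ) + D - r • A).IsHermitian := by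
    rw [Matrix.IsHermitian, Matrix.conjTranspose_eq_transpose_of_trivial]
    simp [Matrix.transpose_add, Matrix.transpose_sub, Matrix.transpose_smul, hA, hD.isSymm.eq]
  set L : Matrix (Fin n) (Fin n) ℝ := S⁻¹ * A * S⁻¹ with hLdef
  have hL : L.IsHermitian := by
    simp only [hLdef, Matrix.IsHermitian, Matrix.conjTranspose_mul, hSinvherm.eq, hAh.eq,
      Matrix.mul_assoc]
  have hsymmS := Matrix.isHermitian_iff_isSymmetric.mp hSherm
  have hsymmSinv := Matrix.isHermitian_iff_isSymmetric.mp hSinvherm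
  have hHM : (r ^ 2 - 1) • (1 : Matrix (Fin n) (Fin n) ℝ) + D - r • A = M - r • A := by
    rw [hMdef]; abel
  -- the congruence linear equivalence
  have hco1 : Matrix.toEuclideanLin S ∘ₗ Matrix.toEuclideanLin S⁻¹ = LinearMap.id := by
    ext x
    simp only [LinearMap.comp_apply, LinearMap.id_apply]
    rw [← toEL_mul, hmulinv, toEL_one]
  have hco2 : Matrix.toEuclideanLin S⁻¹ ∘ₗ Matrix.toEuclideanLin S = LinearMap.id := by
    ext x
    simp only [LinearMap.comp_apply, LinearMap.id_apply]
    rw [← toEL_mul, hinvmul, toEL_one]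
  set eS : EuclideanSpace ℝ (Fin n) ≃ₗ[ℝ] EuclideanSpace ℝ (Fin n) :=
    LinearEquiv.ofLinear (Matrix.toEuclideanLin S) (Matrix.toEuclideanLin S⁻¹) hco1 hco2
    with heSdef
  have heS : ∀ x, eS x = Matrix.toEuclideanLin S x := fun _ => rfl
  -- quadratic form identities
  have hq1 : ∀ x : EuclideanSpace ℝ (Fin n),
      ⟪Matrix.toEuclideanLin S x, Matrix.toEuclideanLin S x⟫ = ⟪x, Matrix.toEuclideanLin M x⟫ := by
    intro x
    rw [hsymmS x (Matrix.toEuclideanLin S x), ← toEL_mul, hSS]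
  have hq2 : ∀ x : EuclideanSpace ℝ (Fin n),
      ⟪Matrix.toEuclideanLin S x, Matrix.toEuclideanLin L (Matrix.toEuclideanLin S x)⟫ =
        ⟪x, Matrix.toEuclideanLin A x⟫ := by
    intro x
    have h1 : Matrix.toEuclideanLin L (Matrix.toEuclideanLin S x) =
        Matrix.toEuclideanLin S⁻¹ (Matrix.toEuclideanLin A x) := by
      rw [← toEL_mul, ← toEL_mul]
      congr 1
      rw [hLdef, Matrix.mul_assoc (S⁻¹ * A) S⁻¹ S, hinvmul, Matrix.mul_one]
    rw [h1, ← hsymmSinv (Matrix.toEuclideanLin S x) (Matrix.toEuclideanLin A x),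
      ← toEL_mul, hinvmul, toEL_one]
  have key : ∀ x : EuclideanSpace ℝ (Fin n),
      ⟪x, Matrix.toEuclideanLin ((r ^ 2 - 1) • (1 : Matrix (Fin n) (Fin n) ℝ) + D - r • A) x⟫ =
        ‖Matrix.toEuclideanLin S x‖ ^ 2 -
          r * ⟪Matrix.toEuclideanLin S x,
                Matrix.toEuclideanLin L (Matrix.toEuclideanLin S x)⟫ := by
    intro x
    rw [hHM, map_sub, _root_.map_smul, LinearMap.sub_apply, LinearMap.smul_apply,
      inner_sub_right, real_inner_smul_right, hq2, ← real_inner_self_eq_norm_sq, hq1]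
  rw [eigAsc_le_iff hH p 0, le_eigDesc_iff hL p (1 / r)]
  constructor
  · rintro ⟨W, hdim, hW⟩
    refine ⟨W.map (eS : EuclideanSpace ℝ (Fin n) →ₗ[ℝ] EuclideanSpace ℝ (Fin n)),
      (LinearEquiv.finrank_map_eq eS W).trans hdim, ?_⟩
    rintro y hy
    rw [Submodule.mem_map] at hy
    obtain ⟨x, hxW, rfl⟩ := hy
    have h0 := hW x hxW
    rw [key x] at h0
    have hN : (0:ℝ) ≤ ‖Matrix.toEuclideanLin S x‖ ^ 2 := sq_nonneg _
    rw [LinearEquiv.coe_coe, heS x]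
    set N := ‖Matrix.toEuclideanLin S x‖ ^ 2
    set Q := ⟪Matrix.toEuclideanLin S x, Matrix.toEuclideanLin L (Matrix.toEuclideanLin S x)⟫
    have hNQ : N ≤ r * Q := by nlinarith
    calc 1 / r * N ≤ 1 / r * (r * Q) := by
          apply mul_le_mul_of_nonneg_left hNQ (by positivity)
      _ = Q := by field_simp
  · rintro ⟨W, hdim, hW⟩
    refine ⟨W.map (eS.symm : EuclideanSpace ℝ (Fin n) →ₗ[ℝ] EuclideanSpace ℝ (Fin n)),
      (LinearEquiv.finrank_map_eq eS.symm W).trans hdim, ?_⟩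
    rintro x hx
    rw [Submodule.mem_map] at hx
    obtain ⟨y, hyW, rfl⟩ := hx
    have h0 := hW y hyW
    have hSy : Matrix.toEuclideanLin S (eS.symm y) = y := by
      rw [← heS (eS.symm y), eS.apply_symm_apply]
    simp only [LinearEquiv.coe_coe]
    rw [key, hSy]
    have : r * (1 / r * ‖y‖ ^ 2) = ‖y‖ ^ 2 := by field_simp
    nlinarith
end

section
/- Let n ≥ 1, let A ∈ ℝ^{n×n} be symmetric, let D ∈ ℝ^{n×n} be diagonal, let r > 0 be such that D + (r²−1)I is positive definite, and let 1 ≤ p ≤ n. If the p-th smallest eigenvalue of the Bethe-Hessian satisfies s_p^↑(H_r) = 0, then the p-th largest eigenvalue of the symmetric regularized Laplacian L^{sym}_{r²−1} = (D+(r²−1)I)^{-1/2} A (D+(r²−1)I)^{-1/2} equals exactly 1/r. -/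
open Matrix

open scoped ComplexOrder in
/-- Mathlib's former `Matrix.PosSemidef.sqrt` (removed since), with its old definition. -/
noncomputable def Matrix.PosSemidef.sqrt {n 𝕜 : Type*} [Fintype n] [RCLike 𝕜] [DecidableEq n]
    {A : Matrix n n 𝕜} (hA : A.PosSemidef) : Matrix n n 𝕜 :=
  (hA.1.eigenvectorUnitary : Matrix n n 𝕜) *
    diagonal (fun i => ((Real.sqrt (hA.1.eigenvalues i) : ℝ) : 𝕜)) *
    (star (hA.1.eigenvectorUnitary : Matrix n n 𝕜))

namespace BHAux

open Module Finset
open scoped RealInnerProductSpace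

variable {n : ℕ}

/-- quadratic form of a matrix on Euclidean space -/
noncomputable def qf (C : Matrix (Fin n) (Fin n) ℝ) (x : EuclideanSpace ℝ (Fin n)) : ℝ :=
  ⟪x, Matrix.toEuclideanLin C x⟫

lemma toEuclideanLin_mul (P Q : Matrix (Fin n) (Fin n) ℝ) (x : EuclideanSpace ℝ (Fin n)) :
    toEuclideanLin (P * Q) x = toEuclideanLin P (toEuclideanLin Q x) := by
  simp [toEuclideanLin_apply, ← mulVec_mulVec]

lemma toEuclideanLin_one' (x : EuclideanSpace ℝ (Fin n)) :
    toEuclideanLin (1 : Matrix (Fin n) (Fin n) ℝ) x = x := by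
  simp [toEuclideanLin_apply]

lemma qf_one (x : EuclideanSpace ℝ (Fin n)) : qf 1 x = ⟪x, x⟫ := by
  rw [qf, toEuclideanLin_one']

lemma qf_smul (c : ℝ) (C : Matrix (Fin n) (Fin n) ℝ) (x) : qf (c • C) x = c * qf C x := by
  rw [qf, qf, _root_.map_smul, LinearMap.smul_apply, real_inner_smul_right]

lemma qf_sub (C₁ C₂ : Matrix (Fin n) (Fin n) ℝ) (x) : qf (C₁ - C₂) x = qf C₁ x - qf C₂ x := by
  rw [qf, qf, qf, map_sub, LinearMap.sub_apply, inner_sub_right]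

lemma qf_congr {S : Matrix (Fin n) (Fin n) ℝ} (hS : S.IsHermitian) (B : Matrix (Fin n) (Fin n) ℝ)
    (x : EuclideanSpace ℝ (Fin n)) : qf (S * B * S) x = qf B (toEuclideanLin S x) := by
  rw [qf, qf, toEuclideanLin_mul, toEuclideanLin_mul]
  exact ((isHermitian_iff_isSymmetric.mp hS) x _).symm

lemma toEuclideanLin_eigen {C : Matrix (Fin n) (Fin n) ℝ} (hC : C.IsHermitian) (j : Fin n) :
    toEuclideanLin C (hC.eigenvectorBasis j) = hC.eigenvalues j • hC.eigenvectorBasis j := by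
  apply PiLp.ext
  intro i
  have := congrFun (hC.mulVec_eigenvectorBasis j) i
  simpa [toEuclideanLin_apply] using this

lemma inner_self_repr {C : Matrix (Fin n) (Fin n) ℝ} (hC : C.IsHermitian)
    (x : EuclideanSpace ℝ (Fin n)) :
    ⟪x, x⟫ = ∑ j, ⟪hC.eigenvectorBasis j, x⟫ * ⟪hC.eigenvectorBasis j, x⟫ := by
  rw [← hC.eigenvectorBasis.sum_inner_mul_inner x x]
  congr 1; funext j; rw [real_inner_comm x]

lemma qf_repr {C : Matrix (Fin n) (Fin n) ℝ} (hC : C.IsHermitian) (x : EuclideanSpace ℝ (Fin n)) :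
    qf C x = ∑ j, hC.eigenvalues j *
      (⟪hC.eigenvectorBasis j, x⟫ * ⟪hC.eigenvectorBasis j, x⟫) := by
  have hx : toEuclideanLin C x
      = ∑ j, ⟪hC.eigenvectorBasis j, x⟫ • (hC.eigenvalues j • hC.eigenvectorBasis j) := by
    conv_lhs => rw [← hC.eigenvectorBasis.sum_repr' x]
    rw [map_sum]
    congr 1; funext j
    rw [_root_.map_smul, toEuclideanLin_eigen hC j]
  rw [qf, hx, inner_sum]
  congr 1; funext j
  rw [real_inner_smul_right, real_inner_smul_right, real_inner_comm x]
  ring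

lemma qf_sub_mul {C : Matrix (Fin n) (Fin n) ℝ} (hC : C.IsHermitian)
    (x : EuclideanSpace ℝ (Fin n)) (t : ℝ) :
    qf C x - t * ⟪x, x⟫ = ∑ j, (hC.eigenvalues j - t) *
      (⟪hC.eigenvectorBasis j, x⟫ * ⟪hC.eigenvectorBasis j, x⟫) := by
  rw [qf_repr hC, inner_self_repr hC, Finset.mul_sum, ← Finset.sum_sub_distrib]
  congr 1; funext j; ring

lemma span_exists {C : Matrix (Fin n) (Fin n) ℝ} (hC : C.IsHermitian) (s : Finset (Fin n)) :
    ∃ W : Submodule ℝ (EuclideanSpace ℝ (Fin n)), finrank ℝ W = s.card ∧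
      ∀ x ∈ W, ∀ j ∉ s, ⟪hC.eigenvectorBasis j, x⟫ = 0 := by
  refine ⟨Submodule.span ℝ (Set.range fun i : s => hC.eigenvectorBasis i), ?_, ?_⟩
  · have : (fun i : s => hC.eigenvectorBasis i) = (⇑hC.eigenvectorBasis ∘ Subtype.val) := rfl
    rw [this, finrank_span_eq_card ((hC.eigenvectorBasis.orthonormal.linearIndependent).comp
      _ Subtype.val_injective)]
    exact Fintype.card_coe s
  · intro x hx j hj
    induction hx using Submodule.span_induction with
    | mem y hy =>
      obtain ⟨i, rfl⟩ := hy
      exact hC.eigenvectorBasis.orthonormal.2 (fun h : j = ↑i => hj (h ▸ i.2))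
    | zero => exact inner_zero_right _
    | add y z _ _ hy hz => rw [inner_add_right, hy, hz, add_zero]
    | smul c y _ hy => rw [real_inner_smul_right, hy, mul_zero]

lemma exists_ne_zero_mem_inf {W V : Submodule ℝ (EuclideanSpace ℝ (Fin n))}
    (h : n < finrank ℝ W + finrank ℝ V) : ∃ x, x ≠ 0 ∧ x ∈ W ∧ x ∈ V := by
  have h1 : finrank ℝ (W ⊔ V : Submodule ℝ (EuclideanSpace ℝ (Fin n))) ≤ n := by
    refine le_trans (Submodule.finrank_le _) ?_
    rw [finrank_euclideanSpace, Fintype.card_fin]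
  have h2 := Submodule.finrank_sup_add_finrank_inf_eq W V
  have h3 : 0 < finrank ℝ (W ⊓ V : Submodule ℝ (EuclideanSpace ℝ (Fin n))) := by omega
  have h4 : (W ⊓ V) ≠ ⊥ := by
    intro hbot
    rw [hbot, finrank_bot] at h3
    exact lt_irrefl 0 h3
  obtain ⟨x, hx, hx0⟩ := Submodule.exists_mem_ne_zero_of_ne_bot h4
  exact ⟨x, hx0, hx.1, hx.2⟩

lemma eigAsc_eq {C : Matrix (Fin n) (Fin n) ℝ} (hC : C.IsHermitian) :
    eigAsc C = hC.eigenvalues ∘ Tuple.sort hC.eigenvalues := dif_pos hC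

lemma exists_coord_ne_zero {C : Matrix (Fin n) (Fin n) ℝ} (hC : C.IsHermitian)
    {x : EuclideanSpace ℝ (Fin n)} (hx : x ≠ 0) :
    ∃ j, ⟪hC.eigenvectorBasis j, x⟫ ≠ 0 := by
  by_contra h
  push_neg at h
  have : ⟪x, x⟫ = 0 := by
    rw [inner_self_repr hC]
    exact Finset.sum_eq_zero fun j _ => by rw [h j, mul_zero]
  exact hx (inner_self_eq_zero.mp this)

lemma low_le {C : Matrix (Fin n) (Fin n) ℝ} (hC : C.IsHermitian) (p : Fin n) :
    ∃ W : Submodule ℝ (EuclideanSpace ℝ (Fin n)), finrank ℝ W = p.1 + 1 ∧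
      ∀ x ∈ W, qf C x ≤ eigAsc C p * ⟪x, x⟫ := by
  obtain ⟨W, hdim, hvan⟩ := span_exists hC (Finset.image (Tuple.sort hC.eigenvalues) (Finset.Iic p))
  refine ⟨W, ?_, ?_⟩
  · rw [hdim, Finset.card_image_of_injective _ (Tuple.sort hC.eigenvalues).injective, Fin.card_Iic]
  · intro x hx
    have key := qf_sub_mul hC x (eigAsc C p)
    have hle : qf C x - eigAsc C p * ⟪x, x⟫ ≤ 0 := by
      rw [key]
      refine Finset.sum_nonpos fun j _ => ?_
      by_cases hj : j ∈ Finset.image (Tuple.sort hC.eigenvalues) (Finset.Iic p)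
      · obtain ⟨i, hi, rfl⟩ := Finset.mem_image.mp hj
        have h1 : hC.eigenvalues (Tuple.sort hC.eigenvalues i) - eigAsc C p ≤ 0 := by
          rw [eigAsc_eq hC]
          have := Tuple.monotone_sort hC.eigenvalues (Finset.mem_Iic.mp hi)
          simpa using sub_nonpos.mpr this
        exact mul_nonpos_of_nonpos_of_nonneg h1 (mul_self_nonneg _)
      · rw [hvan x hx j hj, mul_zero, mul_zero]
    linarith

lemma low_lt {C : Matrix (Fin n) (Fin n) ℝ} (hC : C.IsHermitian) (p : Fin n) {t : ℝ}
    (ht : eigAsc C p < t) :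
    ∃ W : Submodule ℝ (EuclideanSpace ℝ (Fin n)), finrank ℝ W = p.1 + 1 ∧
      ∀ x ∈ W, x ≠ 0 → qf C x < t * ⟪x, x⟫ := by
  obtain ⟨W, hdim, hvan⟩ := span_exists hC (Finset.image (Tuple.sort hC.eigenvalues) (Finset.Iic p))
  refine ⟨W, ?_, ?_⟩
  · rw [hdim, Finset.card_image_of_injective _ (Tuple.sort hC.eigenvalues).injective, Fin.card_Iic]
  · intro x hx hx0
    have key := qf_sub_mul hC x t
    obtain ⟨j₀, hj₀⟩ := exists_coord_ne_zero hC hx0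
    have hj₀s : j₀ ∈ Finset.image (Tuple.sort hC.eigenvalues) (Finset.Iic p) := by
      by_contra h
      exact hj₀ (hvan x hx j₀ h)
    have hlt : qf C x - t * ⟪x, x⟫ < 0 := by
      rw [key]
      have := Finset.sum_lt_sum (s := Finset.univ)
        (f := fun j => (hC.eigenvalues j - t) *
          (⟪hC.eigenvectorBasis j, x⟫ * ⟪hC.eigenvectorBasis j, x⟫))
        (g := fun _ => (0 : ℝ)) ?_ ?_
      · simpa using this
      · intro j _
        by_cases hj : j ∈ Finset.image (Tuple.sort hC.eigenvalues) (Finset.Iic p)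
        · obtain ⟨i, hi, rfl⟩ := Finset.mem_image.mp hj
          have h1 : hC.eigenvalues (Tuple.sort hC.eigenvalues i) - t ≤ 0 := by
            have := Tuple.monotone_sort hC.eigenvalues (Finset.mem_Iic.mp hi)
            rw [eigAsc_eq hC] at ht
            simp only [Function.comp_apply] at this ht
            linarith
          exact mul_nonpos_of_nonpos_of_nonneg h1 (mul_self_nonneg _)
        · simp only [hvan x hx j hj, mul_zero, le_refl]
      · refine ⟨j₀, Finset.mem_univ _, ?_⟩
        obtain ⟨i, hi, rfl⟩ := Finset.mem_image.mp hj₀s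
        have h1 : hC.eigenvalues (Tuple.sort hC.eigenvalues i) - t < 0 := by
          have := Tuple.monotone_sort hC.eigenvalues (Finset.mem_Iic.mp hi)
          rw [eigAsc_eq hC] at ht
          simp only [Function.comp_apply] at this ht
          linarith
        exact mul_neg_of_neg_of_pos h1 (mul_self_pos.mpr hj₀)
    linarith

lemma high_ge {C : Matrix (Fin n) (Fin n) ℝ} (hC : C.IsHermitian) (p : Fin n) :
    ∃ W : Submodule ℝ (EuclideanSpace ℝ (Fin n)), finrank ℝ W = n - p.1 ∧
      ∀ x ∈ W, eigAsc C p * ⟪x, x⟫ ≤ qf C x := by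
  obtain ⟨W, hdim, hvan⟩ := span_exists hC (Finset.image (Tuple.sort hC.eigenvalues) (Finset.Ici p))
  refine ⟨W, ?_, ?_⟩
  · rw [hdim, Finset.card_image_of_injective _ (Tuple.sort hC.eigenvalues).injective, Fin.card_Ici]
  · intro x hx
    have key := qf_sub_mul hC x (eigAsc C p)
    have hge : 0 ≤ qf C x - eigAsc C p * ⟪x, x⟫ := by
      rw [key]
      refine Finset.sum_nonneg fun j _ => ?_
      by_cases hj : j ∈ Finset.image (Tuple.sort hC.eigenvalues) (Finset.Ici p)
      · obtain ⟨i, hi, rfl⟩ := Finset.mem_image.mp hj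
        have h1 : 0 ≤ hC.eigenvalues (Tuple.sort hC.eigenvalues i) - eigAsc C p := by
          rw [eigAsc_eq hC]
          have := Tuple.monotone_sort hC.eigenvalues (Finset.mem_Ici.mp hi)
          simpa using sub_nonneg.mpr this
        exact mul_nonneg h1 (mul_self_nonneg _)
      · rw [hvan x hx j hj, mul_zero, mul_zero]
    linarith

lemma high_gt {C : Matrix (Fin n) (Fin n) ℝ} (hC : C.IsHermitian) (p : Fin n) {t : ℝ}
    (ht : t < eigAsc C p) :
    ∃ W : Submodule ℝ (EuclideanSpace ℝ (Fin n)), finrank ℝ W = n - p.1 ∧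
      ∀ x ∈ W, x ≠ 0 → t * ⟪x, x⟫ < qf C x := by
  obtain ⟨W, hdim, hvan⟩ := span_exists hC (Finset.image (Tuple.sort hC.eigenvalues) (Finset.Ici p))
  refine ⟨W, ?_, ?_⟩
  · rw [hdim, Finset.card_image_of_injective _ (Tuple.sort hC.eigenvalues).injective, Fin.card_Ici]
  · intro x hx hx0
    have key := qf_sub_mul hC x t
    obtain ⟨j₀, hj₀⟩ := exists_coord_ne_zero hC hx0
    have hj₀s : j₀ ∈ Finset.image (Tuple.sort hC.eigenvalues) (Finset.Ici p) := by
      by_contra h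
      exact hj₀ (hvan x hx j₀ h)
    have hlt : 0 < qf C x - t * ⟪x, x⟫ := by
      rw [key]
      have := Finset.sum_lt_sum (s := Finset.univ)
        (f := fun _ => (0 : ℝ))
        (g := fun j => (hC.eigenvalues j - t) *
          (⟪hC.eigenvectorBasis j, x⟫ * ⟪hC.eigenvectorBasis j, x⟫)) ?_ ?_
      · simpa using this
      · intro j _
        by_cases hj : j ∈ Finset.image (Tuple.sort hC.eigenvalues) (Finset.Ici p)
        · obtain ⟨i, hi, rfl⟩ := Finset.mem_image.mp hj
          have h1 : 0 ≤ hC.eigenvalues (Tuple.sort hC.eigenvalues i) - t := by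
            have := Tuple.monotone_sort hC.eigenvalues (Finset.mem_Ici.mp hi)
            rw [eigAsc_eq hC] at ht
            simp only [Function.comp_apply] at this ht
            linarith
          exact mul_nonneg h1 (mul_self_nonneg _)
        · simp only [hvan x hx j hj, mul_zero, le_refl]
      · refine ⟨j₀, Finset.mem_univ _, ?_⟩
        obtain ⟨i, hi, rfl⟩ := Finset.mem_image.mp hj₀s
        have h1 : 0 < hC.eigenvalues (Tuple.sort hC.eigenvalues i) - t := by
          have := Tuple.monotone_sort hC.eigenvalues (Finset.mem_Ici.mp hi)
          rw [eigAsc_eq hC] at ht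
          simp only [Function.comp_apply] at this ht
          linarith
        exact mul_pos h1 (mul_self_pos.mpr hj₀)
    linarith

lemma le_eigAsc_of {C : Matrix (Fin n) (Fin n) ℝ} (hC : C.IsHermitian) (p : Fin n) (t : ℝ)
    (W : Submodule ℝ (EuclideanSpace ℝ (Fin n))) (hdim : finrank ℝ W = n - p.1)
    (h : ∀ x ∈ W, t * ⟪x, x⟫ ≤ qf C x) : t ≤ eigAsc C p := by
  by_contra h'
  push_neg at h'
  obtain ⟨W', hdim', h'lt⟩ := low_lt hC p h'
  obtain ⟨x, hx0, hxW, hxW'⟩ := exists_ne_zero_mem_inf (W := W) (V := W')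
    (by rw [hdim, hdim']; have := p.2; omega)
  have := h x hxW
  have := h'lt x hxW' hx0
  linarith

lemma eigAsc_lt_of {C : Matrix (Fin n) (Fin n) ℝ} (hC : C.IsHermitian) (p : Fin n) (t : ℝ)
    (W : Submodule ℝ (EuclideanSpace ℝ (Fin n))) (hdim : finrank ℝ W = p.1 + 1)
    (h : ∀ x ∈ W, x ≠ 0 → qf C x < t * ⟪x, x⟫) : eigAsc C p < t := by
  by_contra h'
  push_neg at h'
  obtain ⟨V, hdimV, hV⟩ := high_ge hC p
  obtain ⟨x, hx0, hxW, hxV⟩ := exists_ne_zero_mem_inf (W := W) (V := V)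
    (by rw [hdim, hdimV]; have := p.2; omega)
  have h1 := h x hxW hx0
  have h2 := hV x hxV
  have h3 : t * ⟪x, x⟫ ≤ eigAsc C p * ⟪x, x⟫ :=
    mul_le_mul_of_nonneg_right h' real_inner_self_nonneg
  linarith

lemma herm_of_transpose {A : Matrix (Fin n) (Fin n) ℝ} (h : Aᵀ = A) : A.IsHermitian := by
  show Aᴴ = A
  ext i j
  rw [conjTranspose_apply, star_trivial]
  exact congrFun (congrFun h i) j

end BHAux

lemma BHAux_posSemidef_sqrt {n : ℕ} {A : Matrix (Fin n) (Fin n) ℝ} (hA : A.PosSemidef) :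
    hA.sqrt.PosSemidef := by
  unfold Matrix.PosSemidef.sqrt
  rw [star_eq_conjTranspose]
  refine PosSemidef.mul_mul_conjTranspose_same ?_ _
  rw [posSemidef_diagonal_iff]
  intro i
  simpa using Real.sqrt_nonneg _

lemma BHAux_sqrt_mul_self {n : ℕ} {A : Matrix (Fin n) (Fin n) ℝ} (hA : A.PosSemidef) :
    hA.sqrt * hA.sqrt = A := by
  unfold Matrix.PosSemidef.sqrt
  have hU : star (hA.1.eigenvectorUnitary : Matrix (Fin n) (Fin n) ℝ) *
      (hA.1.eigenvectorUnitary : Matrix (Fin n) (Fin n) ℝ) = 1 := Unitary.coe_star_mul_self _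
  have hd : diagonal (fun i => (RCLike.ofReal (Real.sqrt (hA.1.eigenvalues i)) : ℝ)) *
      diagonal (fun i => (RCLike.ofReal (Real.sqrt (hA.1.eigenvalues i)) : ℝ)) =
      diagonal (RCLike.ofReal ∘ hA.1.eigenvalues) := by
    rw [diagonal_mul_diagonal]
    congr 1; funext i
    simp [Real.mul_self_sqrt (hA.eigenvalues_nonneg i)]
  conv_rhs => rw [hA.1.spectral_theorem]
  rw [Unitary.conjStarAlgAut_apply]
  calc _ = (hA.1.eigenvectorUnitary : Matrix (Fin n) (Fin n) ℝ) *
      diagonal (fun i => (RCLike.ofReal (Real.sqrt (hA.1.eigenvalues i)) : ℝ)) *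
      (star (hA.1.eigenvectorUnitary : Matrix (Fin n) (Fin n) ℝ) *
      (hA.1.eigenvectorUnitary : Matrix (Fin n) (Fin n) ℝ)) *
      diagonal (fun i => (RCLike.ofReal (Real.sqrt (hA.1.eigenvalues i)) : ℝ)) *
      star (hA.1.eigenvectorUnitary : Matrix (Fin n) (Fin n) ℝ) := by simp only [Matrix.mul_assoc]
    _ = _ := by rw [hU, Matrix.mul_one, Matrix.mul_assoc _ (diagonal _) (diagonal _), hd]


/-- For symmetric `A`, diagonal `D`, `r > 0` with `D + (r²−1)I` positive
definite: if the `p`-th smallest eigenvalue of the Bethe-Hessian `H_r = (r²−1)I + D − rA`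
is `0`, then the `p`-th largest eigenvalue of the symmetric regularized Laplacian
`L^{sym}_{r²−1} = (D+(r²−1)I)^{-1/2} A (D+(r²−1)I)^{-1/2}` equals exactly `1/r`. -/
theorem betheHessian_zero_eig_implies_regSymLaplacian_eig
    (n : ℕ) (hn : 1 ≤ n)
    (A D : Matrix (Fin n) (Fin n) ℝ)
    (hA : Aᵀ = A) (hD : D.IsDiag)
    (r : ℝ) (hr : 0 < r)
    (hM : (D + (r ^ 2 - 1) • (1 : Matrix (Fin n) (Fin n) ℝ)).PosDef)
    (p : Fin n)
    (h0 : eigAsc ((r ^ 2 - 1) • (1 : Matrix (Fin n) (Fin n) ℝ) + D - r • A) p = 0) :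
    eigDesc ((hM.posSemidef.sqrt)⁻¹ * A * (hM.posSemidef.sqrt)⁻¹) p = 1 / r := by
  classical
  open BHAux Module in
  open scoped RealInnerProductSpace in
  -- notation
  set M : Matrix (Fin n) (Fin n) ℝ := D + (r ^ 2 - 1) • (1 : Matrix (Fin n) (Fin n) ℝ) with hMdef
  set S : Matrix (Fin n) (Fin n) ℝ := hM.posSemidef.sqrt with hSdef
  set L : Matrix (Fin n) (Fin n) ℝ := S⁻¹ * A * S⁻¹ with hLdef
  set H : Matrix (Fin n) (Fin n) ℝ :=
    (r ^ 2 - 1) • (1 : Matrix (Fin n) (Fin n) ℝ) + D - r • A with hHdef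
  set B : Matrix (Fin n) (Fin n) ℝ := 1 - r • L with hBdef
  -- basic facts about S
  have hSpsd : S.PosSemidef := BHAux_posSemidef_sqrt hM.posSemidef
  have hSherm : S.IsHermitian := hSpsd.1
  have hSS : S * S = M := BHAux_sqrt_mul_self hM.posSemidef
  have hdet : IsUnit S.det := by
    have h1 : S.det * S.det = M.det := by rw [← det_mul, hSS]
    have h2 : 0 < M.det := hM.det_pos
    have : S.det ≠ 0 := by
      intro h
      rw [h, mul_zero] at h1
      exact h2.ne' h1.symm
    exact isUnit_iff_ne_zero.mpr this
  have hSinv : S⁻¹.IsHermitian := hSherm.inv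
  -- hermitian facts
  have hAherm : A.IsHermitian := herm_of_transpose hA
  have hDt : Dᵀ = D := by
    ext i j
    by_cases h : i = j
    · subst h; rfl
    · rw [transpose_apply, hD (fun hh => h hh.symm), hD h]
  have hDherm : D.IsHermitian := herm_of_transpose hDt
  have hLherm : L.IsHermitian := by
    have := isHermitian_mul_mul_conjTranspose S⁻¹ hAherm
    rw [hSinv.eq] at this
    exact this
  have hBherm : B.IsHermitian := by
    refine Matrix.IsHermitian.sub isHermitian_one ?_
    show (r • L)ᴴ = r • L
    rw [conjTranspose_smul, hLherm.eq, star_trivial]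
  have hHherm : H.IsHermitian := by
    refine Matrix.IsHermitian.sub (Matrix.IsHermitian.add ?_ hDherm) ?_
    · show ((r ^ 2 - 1) • (1 : Matrix (Fin n) (Fin n) ℝ))ᴴ = _
      rw [conjTranspose_smul, (isHermitian_one (n := Fin n) (α := ℝ)).eq, star_trivial]
    · show (r • A)ᴴ = r • A
      rw [conjTranspose_smul, hAherm.eq, star_trivial]
  -- congruence identity
  have hSLS : S * L * S = A := by
    have h1 : S * S⁻¹ = 1 := Matrix.mul_nonsing_inv S hdet
    have h2 : S⁻¹ * S = 1 := Matrix.nonsing_inv_mul S hdet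
    calc S * (S⁻¹ * A * S⁻¹) * S = (S * S⁻¹) * A * (S⁻¹ * S) := by noncomm_ring
    _ = A := by rw [h1, h2, Matrix.one_mul, Matrix.mul_one]
  have hH : H = S * B * S := by
    rw [hBdef, Matrix.mul_sub, Matrix.sub_mul, Matrix.mul_one, mul_smul_comm, smul_mul_assoc,
      hSLS, hSS, hHdef, hMdef]
    abel
  -- transfer of quadratic forms
  have hqH : ∀ x, qf H x = qf B (toEuclideanLin S x) := fun x => by
    rw [hH]; exact qf_congr hSherm B x
  have hqB : ∀ y, qf B y = ⟪y, y⟫ - r * qf L y := fun y => by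
    rw [hBdef, qf_sub, qf_one, qf_smul]
  -- cancellation
  have cancel1 : ∀ x, toEuclideanLin S⁻¹ (toEuclideanLin S x) = x := fun x => by
    rw [← toEuclideanLin_mul, Matrix.nonsing_inv_mul S hdet, toEuclideanLin_one']
  have cancel2 : ∀ x, toEuclideanLin S (toEuclideanLin S⁻¹ x) = x := fun x => by
    rw [← toEuclideanLin_mul, Matrix.mul_nonsing_inv S hdet, toEuclideanLin_one']
  have injS : Function.Injective (toEuclideanLin S) := by
    intro x y h
    have := congrArg (toEuclideanLin S⁻¹) h
    rwa [cancel1, cancel1] at this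
  have injSi : Function.Injective (toEuclideanLin S⁻¹) := by
    intro x y h
    have := congrArg (toEuclideanLin S) h
    rwa [cancel2, cancel2] at this
  -- index arithmetic
  set q : Fin n := p.rev with hqdef
  have hqval : (q : ℕ) = n - (p.1 + 1) := Fin.val_rev p
  have hq1 : q.1 + 1 = n - p.1 := by have := p.2; omega
  have hq2 : n - q.1 = p.1 + 1 := by have := p.2; omega
  -- Step 1 : 1/r ≤ eigAsc L q
  have step1 : 1 / r ≤ eigAsc L q := by
    obtain ⟨W, hWdim, hW⟩ := low_le hHherm p
    refine le_eigAsc_of hLherm q (1 / r) (W.map (toEuclideanLin S)) ?_ ?_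
    · rw [← (Submodule.equivMapOfInjective _ injS W).finrank_eq, hWdim, hq2]
    · rintro y hy
      obtain ⟨x, hx, rfl⟩ := Submodule.mem_map.mp hy
      have h1 : qf B (toEuclideanLin S x) ≤ 0 := by
        have := hW x hx
        rw [h0, zero_mul] at this
        rw [← hqH]
        exact this
      rw [hqB] at h1
      set y := toEuclideanLin S x
      have h2 : ⟪y, y⟫ ≤ r * qf L y := by linarith
      have h3 : (1 / r) * ⟪y, y⟫ ≤ (1 / r) * (r * qf L y) :=
        mul_le_mul_of_nonneg_left h2 (by positivity)
      calc (1 / r) * ⟪y, y⟫ ≤ (1 / r) * (r * qf L y) := h3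
      _ = qf L y := by field_simp
  -- Step 2 : eigAsc L q ≤ 1/r
  have step2 : eigAsc L q ≤ 1 / r := by
    by_contra hc
    push_neg at hc
    obtain ⟨V, hVdim, hV⟩ := high_gt hLherm q hc
    have hH0 : eigAsc H p < 0 := by
      refine eigAsc_lt_of hHherm p 0 (V.map (toEuclideanLin S⁻¹)) ?_ ?_
      · rw [← (Submodule.equivMapOfInjective _ injSi V).finrank_eq, hVdim, hq2]
      · rintro x hx hx0
        obtain ⟨y, hy, rfl⟩ := Submodule.mem_map.mp hx
        have hy0 : y ≠ 0 := by
          intro h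
          apply hx0
          rw [h, map_zero]
        have h1 := hV y hy hy0
        have h2 : qf H (toEuclideanLin S⁻¹ y) = qf B y := by
          rw [hqH, cancel2]
        rw [h2, hqB, zero_mul]
        have h3 : r * ((1 / r) * ⟪y, y⟫) < r * qf L y :=
          mul_lt_mul_of_pos_left h1 hr
        have h4 : r * ((1 / r) * ⟪y, y⟫) = ⟪y, y⟫ := by field_simp
        linarith
    rw [h0] at hH0
    exact lt_irrefl 0 hH0
  show eigAsc L q = 1 / r
  exact le_antisymm step2 step1
end
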